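/- With notation as in the previous lemma (finite-dimensional filtered k-vector spaces M_i, 0 ≤ i ≤ f-1, with three-step filtrations, and Fil^k M = ⊗_i Fil^{k_i} M_i for k ∈ {0,1,2}^f), for any subsets I, I' ⊆ {0,1,2}^f one has (Σ_{k∈I} Fil^k M) ∩ (Σ_{k'∈I'} Fil^{k'} M) = Σ_{k∈I, k'∈I'} (Fil^k M ∩ Fil^{k'} M). -/

import Mathlib

/-
Choose for each `i` a basis of `M i` adapted to the flag `F i 2 ≤ F i 1 ≤ F i 0`. The pure
tensors of these basis vectors form a basis of `M` in which every `Fil^k M` is spanned by the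
basis vectors indexed by a box `T k`. For a linearly independent family `v`, `s ↦ span (v '' s)`
preserves both `⊔` and `⊓`, so the identity is pulled back to the distributive lattice of index
sets, where it is `Finset.sup_inf_sup`.
-/

open scoped TensorProduct

namespace TensorFil11

variable {𝕜 : Type*} [Field 𝕜] {f : ℕ}
variable (𝕜) (M : Fin f → Type*) [∀ i, AddCommGroup (M i)] [∀ i, Module 𝕜 (M i)]

/-- `Fil^k M = ⊗_i Fil^{k_i} M_i ⊆ M = ⊗_i M_i`. -/
noncomputable def filT (F : ∀ i, ℕ → Submodule 𝕜 (M i)) (k : Fin f → ℕ) :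
    Submodule 𝕜 (⨂[𝕜] i, M i) :=
  LinearMap.range (PiTensorProduct.map fun i => (F i (k i)).subtype)

universe u

open Submodule

theorem span_image_inf_span_image {R V ι : Type*} [Semiring R] [AddCommMonoid V] [Module R V]
    {v : ι → V} (hv : LinearIndependent R v) (s t : Set ι) :
    span R (v '' s) ⊓ span R (v '' t) = span R (v '' (s ∩ t)) := by
  simp only [Finsupp.span_image_eq_map_linearCombination, Finsupp.supported_inter,
    Submodule.map_inf _ hv]

theorem span_image_finset_sup {R V ι α : Type*} [Semiring R] [AddCommMonoid V] [Module R V]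
    (v : ι → V) (I : Finset α) (T : α → Set ι) :
    span R (v '' I.sup T) = I.sup fun a => span R (v '' T a) :=
  Finset.apply_sup_eq_sup_comp (fun s => span R (v '' s))
    (fun s t => by simp only [Set.sup_eq_union, Set.image_union, span_union])
    (by simp only [Set.bot_eq_empty, Set.image_empty, span_empty])

theorem exists_linearIndepOn_forall_le_span_eq {K V : Type*} [DivisionRing K] [AddCommGroup V]
    [Module K V] (n : ℕ) (F : ℕ → Submodule K V) (hF : Antitone F) :
    ∃ S : ℕ → Set V, LinearIndepOn K id (S 0) ∧ (∀ k, S k ⊆ S 0) ∧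
      ∀ k ≤ n, span K (S k) = F k := by
  induction n generalizing F with
  | zero =>
    obtain ⟨S, -, hS, hSind⟩ := exists_linearIndependent K (F 0 : Set V)
    refine ⟨fun _ => S, hSind, fun _ => subset_rfl, fun k hk => ?_⟩
    rw [Nat.le_zero.mp hk, hS, span_eq]
  | succ n ih =>
    obtain ⟨S, hSind, hS0, hSspan⟩ := ih (F ·.succ) fun _ _ h => hF (Nat.succ_le_succ h)
    have hSF : S 0 ⊆ F 0 := fun x hx => hF (Nat.zero_le 1) (hSspan 0 n.zero_le ▸ subset_span hx)
    refine ⟨fun k => k.casesOn (hSind.extend hSF) S, hSind.linearIndepOn_extend hSF, ?_, ?_⟩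
    · rintro (_ | k)
      exacts [subset_rfl, (hS0 k).trans (hSind.subset_extend hSF)]
    · rintro (_ | k) hk
      exacts [(hSind.span_extend_eq_span hSF).trans (span_eq _), hSspan k (by omega)]

theorem exists_basis_forall_le_eq_span_image {K : Type*} {V : Type u} [DivisionRing K]
    [AddCommGroup V] [Module K V] (n : ℕ) (F : ℕ → Submodule K V) (hF : Antitone F) :
    ∃ (ι : Type u) (b : Module.Basis ι K V) (S : ℕ → Set ι),
      ∀ k ≤ n, F k = span K (b '' S k) := by
  obtain ⟨S, hSind, hS0, hSspan⟩ := exists_linearIndepOn_forall_le_span_eq n F hF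
  refine ⟨_, Module.Basis.extend hSind, fun k => Subtype.val ⁻¹' S k, fun k hk => ?_⟩
  rw [Module.Basis.coe_extend, Subtype.image_preimage_coe, ← hSspan k hk,
    Set.inter_eq_right.mpr ((hS0 k).trans (hSind.subset_extend _))]

theorem range_map_subtype_eq_span_image {ι R : Type*} [Finite ι] [CommRing R] {M : ι → Type*}
    [∀ i, AddCommGroup (M i)] [∀ i, Module R (M i)] {κ : ι → Type*}
    (N : ∀ i, Submodule R (M i)) (b : ∀ i, κ i → M i) (s : ∀ i, Set (κ i))
    (h : ∀ i, N i = span R (b i '' s i)) :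
    LinearMap.range (PiTensorProduct.map fun i => (N i).subtype) =
      span R ((fun x => ⨂ₜ[R] i, b i (x i)) '' Set.univ.pi s) := by
  let g : ∀ i, s i → N i := fun i j => ⟨b i j, h i ▸ subset_span (Set.mem_image_of_mem _ j.2)⟩
  have hg : ∀ i, span R (Set.range (g i)) = ⊤ := fun i =>
    map_injective_of_injective (N i).injective_subtype <| by
      rw [map_span, Submodule.map_top, range_subtype, ← Set.range_comp]
      conv_rhs => rw [h i, ← Subtype.range_coe (s := s i), ← Set.range_comp]
      rfl
  rw [LinearMap.range_eq_map, ← PiTensorProduct.submodule_span_eq_top hg, map_span,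
    ← Set.range_comp]
  have hpi : Set.univ.pi s = Set.range (Pi.map fun i => ((↑) : s i → κ i)) := by
    simp only [Set.range_piMap, Subtype.range_coe]
  rw [hpi, ← Set.range_comp]
  simp only [Function.comp_def, PiTensorProduct.map_tprod]
  rfl

theorem filI_inf_filI (F : ∀ i, ℕ → Submodule 𝕜 (M i))
    (hF : ∀ i, Antitone (F i))
    (I I' : Finset (Fin f → ℕ))
    (hI : ∀ k ∈ I, ∀ i, k i ≤ 2) (hI' : ∀ k ∈ I', ∀ i, k i ≤ 2) :
    (I.sup fun k => filT 𝕜 M F k) ⊓ (I'.sup fun k => filT 𝕜 M F k) =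
      (I ×ˢ I').sup fun kk => filT 𝕜 M F kk.1 ⊓ filT 𝕜 M F kk.2 := by
  choose ι b S hS using fun i => exists_basis_forall_le_eq_span_image 2 (F i) (hF i)
  have hv : LinearIndependent 𝕜 fun x : (∀ i, ι i) => ⨂ₜ[𝕜] i, b i (x i) :=
    funext (Basis.piTensorProduct_apply b) ▸ (Basis.piTensorProduct b).linearIndependent
  set v := fun x : (∀ i, ι i) => ⨂ₜ[𝕜] i, b i (x i)
  let T : (Fin f → ℕ) → Set (∀ i, ι i) := fun k => Set.univ.pi fun i => S i (k i)
  have hfilT : ∀ k, (∀ i, k i ≤ 2) → filT 𝕜 M F k = span 𝕜 (v '' T k) := fun k hk =>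
    range_map_subtype_eq_span_image _ _ _ fun i => hS i (k i) (hk i)
  have hsup : ∀ J : Finset (Fin f → ℕ), (∀ k ∈ J, ∀ i, k i ≤ 2) →
      J.sup (filT 𝕜 M F) = span 𝕜 (v '' J.sup T) := fun J hJ => by
    rw [span_image_finset_sup]
    exact Finset.sup_congr rfl fun k hk => hfilT k (hJ k hk)
  calc _ = span 𝕜 (v '' I.sup T) ⊓ span 𝕜 (v '' I'.sup T) := by rw [hsup I hI, hsup I' hI']
    _ = span 𝕜 (v '' (I ×ˢ I').sup fun kk => T kk.1 ⊓ T kk.2) := by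
      rw [span_image_inf_span_image hv, ← Finset.sup_inf_sup]
      rfl
    _ = _ := by
      rw [span_image_finset_sup]
      refine Finset.sup_congr rfl fun kk hkk => ?_
      rw [Finset.mem_product] at hkk
      rw [hfilT _ (hI _ hkk.1), hfilT _ (hI' _ hkk.2), span_image_inf_span_image hv]
      rfl

end TensorFil11
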